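/- arXiv:2009.06565 — 5 statements merged into one kernel-verified Lean document; each statement's English description precedes it below -/
import Mathlib

section
/- Let T be a tournament on n vertices and M a set of m vertices whose out-degrees sum to m(m-1)/2. Then no directed (consistently oriented) cycle of T contains both a vertex of M and a vertex outside M. -/
open Finset

/-- A tournament on `Fin n`: irreflexive, and between any two distinct
vertices exactly one directed edge. -/
def IsTournament {n : ℕ} (T : Fin n → Fin n → Bool) : Prop :=
  (∀ v, T v v = false) ∧ ∀ u v : Fin n, u ≠ v → (T u v = !T v u)

/-- The score (out-degree) of a vertex in a tournament. -/
def score {n : ℕ} (T : Fin n → Fin n → Bool) (v : Fin n) : ℕ :=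
  (Finset.univ.filter (fun w => T v w = true)).card

/-- A consistently oriented (directed) cycle, given by an injective cyclic
sequence of vertices each beating the next. -/
def IsDirCycle {n m : ℕ} (T : Fin n → Fin n → Bool) (c : Fin (m + 1) → Fin n) : Prop :=
  Function.Injective c ∧ ∀ i, T (c i) (c (i + 1)) = true

/-!
The `|M|(|M|-1)/2` arcs inside `M` already contribute that much to the total score of `M`,
so equality forces every arc between `M` and its complement to point into `M`. A directed
cycle that enters `M` can therefore never leave it.
-/

open Fin.NatCast

theorem Fin.forall_of_imp_add_one {m : ℕ} {p : Fin (m + 1) → Prop}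
    (hstep : ∀ i, p i → p (i + 1)) {i : Fin (m + 1)} (hi : p i) (j : Fin (m + 1)) : p j := by
  have hreach : ∀ k : ℕ, p (i + k) := by
    intro k
    induction k with
    | zero => simpa using hi
    | succ k ih => simpa [add_assoc] using hstep _ ih
  simpa using hreach (j - i).val

namespace IsTournament

variable {n : ℕ} {T : Fin n → Fin n → Bool}

theorem ite_add_ite (hT : IsTournament T) (v w : Fin n) :
    ((if T v w = true then 1 else 0) + (if T w v = true then 1 else 0) : ℕ) =
      if v = w then 0 else 1 := by
  by_cases hvw : v = w
  · subst hvw; simp [hT.1 v]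
  · cases h : T w v <;> simp [hT.2 v w hvw, h, hvw]

theorem two_mul_sum_card_filter (hT : IsTournament T) (M : Finset (Fin n)) :
    2 * ∑ v ∈ M, (M.filter (fun w => T v w = true)).card = M.card * (M.card - 1) :=
  calc 2 * ∑ v ∈ M, (M.filter (fun w => T v w = true)).card
      = ∑ v ∈ M, ∑ w ∈ M, ((if T v w = true then 1 else 0)
          + (if T w v = true then 1 else 0) : ℕ) := by
        simp only [Finset.sum_add_distrib, Finset.card_filter, two_mul]
        rw [Finset.sum_comm (f := fun v w => if T w v = true then 1 else 0)]
    _ = ∑ v ∈ M, ∑ w ∈ M, (if v = w then 0 else 1 : ℕ) := by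
        simp only [hT.ite_add_ite]
    _ = ∑ v ∈ M, (M.card - 1) := by
        refine Finset.sum_congr rfl fun v hv => ?_
        rw [← Finset.card_erase_of_mem hv, ← Finset.filter_ne', Finset.card_filter]
        exact Finset.sum_congr rfl fun w _ => by split_ifs <;> simp_all
    _ = M.card * (M.card - 1) := by rw [Finset.sum_const, smul_eq_mul]

end IsTournament

theorem score_eq_card_filter_add_card_filter_compl {n : ℕ} (T : Fin n → Fin n → Bool)
    (M : Finset (Fin n)) (v : Fin n) :
    score T v = (M.filter (fun w => T v w = true)).card
      + (Mᶜ.filter (fun w => T v w = true)).card := by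
  rw [score, ← Finset.card_union_of_disjoint
    (Finset.disjoint_filter_filter disjoint_compl_right),
    ← Finset.filter_union, Finset.union_compl]

theorem IsTournament.not_beats_of_sum_score_eq {n : ℕ} {T : Fin n → Fin n → Bool}
    (hT : IsTournament T) {M : Finset (Fin n)}
    (hsum : ∑ v ∈ M, score T v = M.card * (M.card - 1) / 2)
    {v w : Fin n} (hv : v ∈ M) (hw : w ∉ M) : T v w = false := by
  have hinside := hT.two_mul_sum_card_filter M
  simp only [score_eq_card_filter_add_card_filter_compl T M, Finset.sum_add_distrib] at hsum
  have hout : ∑ u ∈ M, (Mᶜ.filter (fun w => T u w = true)).card = 0 := by omega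
  have hv_out := (Finset.sum_eq_zero_iff.mp hout) v hv
  rw [Finset.card_eq_zero, Finset.filter_eq_empty_iff] at hv_out
  simpa using hv_out (Finset.mem_compl.mpr hw)

/-- If the out-degrees of a set `M` of `m` vertices sum to `m(m-1)/2`, then no
directed cycle contains both a vertex of `M` and a vertex outside `M`. -/
theorem no_directed_cycle_crossing {n : ℕ} (T : Fin n → Fin n → Bool)
    (hT : IsTournament T) (M : Finset (Fin n))
    (hsum : ∑ v ∈ M, score T v = M.card * (M.card - 1) / 2) :
    ∀ (m : ℕ) (c : Fin (m + 1) → Fin n), IsDirCycle T c →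
      ¬ ((∃ i, c i ∈ M) ∧ (∃ j, c j ∉ M)) := by
  rintro m c hc ⟨⟨i, hi⟩, ⟨j, hj⟩⟩
  have hstep : ∀ k, c k ∈ M → c (k + 1) ∈ M := fun k hk => by
    by_contra hk'
    exact absurd (hc.2 k) (by simp [hT.not_beats_of_sum_score_eq hsum hk hk'])
  exact hj (Fin.forall_of_imp_add_one (p := fun k => c k ∈ M) hstep hi j)
end

section
/- Let T be a tournament on 6 vertices with score sequence (1,2,3,3,3,3). Let a be the vertex of out-degree 1, b the vertex of out-degree 2, and let T' be the subtournament induced on the four vertices of out-degree 3. Then T' has score sequence (1,1,1,3) or (1,1,2,2), and if the edge between a and b is oriented from a to b, then T' has score sequence (1,1,2,2). -/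
/-!
Each vertex of the set `C` of the four score-3 vertices plays only two games outside `C`, so it
wins between one and three games inside `C`, and the six games inside `C` give total score 6;
the only such multisets are `{1,1,1,3}` and `{1,1,2,2}`. If `a` beats `b`, that is `a`'s only win,
so every vertex of `C` beats `a` and none can win all three of its games inside `C`.
-/

open Finset

section

variable {n : ℕ}

lemma score_eq_card_beats_add_card_beats_compl (T : Fin n → Fin n → Bool)
    (s : Finset (Fin n)) (v : Fin n) :
    score T v = #{y ∈ s | T v y = true} + #{y ∈ sᶜ | T v y = true} := by
  rw [score, ← card_union_of_disjoint (disjoint_filter_filter disjoint_compl_right),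
    ← filter_union, union_compl]

lemma card_beats_le_score (T : Fin n → Fin n → Bool) (s : Finset (Fin n)) (v : Fin n) :
    #{y ∈ s | T v y = true} ≤ score T v := by
  rw [score_eq_card_beats_add_card_beats_compl T s v]
  exact Nat.le_add_right _ _

lemma score_sub_card_compl_le_card_beats (T : Fin n → Fin n → Bool)
    (s : Finset (Fin n)) (v : Fin n) :
    score T v - #sᶜ ≤ #{y ∈ s | T v y = true} := by
  have := card_filter_le sᶜ (fun y => T v y = true)
  rw [score_eq_card_beats_add_card_beats_compl T s v]
  omega

lemma card_beats_lt_score_of_beats {T : Fin n → Fin n → Bool} {s : Finset (Fin n)}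
    {u v : Fin n} (hu : u ∉ s) (hvu : T v u = true) :
    #{y ∈ s | T v y = true} < score T v := by
  rw [score_eq_card_beats_add_card_beats_compl T s v, Nat.lt_add_right_iff_pos, card_pos]
  exact ⟨u, mem_filter.2 ⟨mem_compl.2 hu, hvu⟩⟩

lemma eq_of_score_eq_one {T : Fin n → Fin n → Bool} {u v w : Fin n}
    (hv : score T v = 1) (hu : T v u = true) (hw : T v w = true) : u = w := by
  obtain ⟨z, hz⟩ := card_eq_one.1 hv
  have hu' : u ∈ ({z} : Finset (Fin n)) := hz ▸ mem_filter.2 ⟨mem_univ u, hu⟩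
  have hw' : w ∈ ({z} : Finset (Fin n)) := hz ▸ mem_filter.2 ⟨mem_univ w, hw⟩
  rw [mem_singleton] at hu' hw'
  rw [hu', hw']

namespace IsTournament

variable {T : Fin n → Fin n → Bool}

lemma beats_of_not_beats (hT : IsTournament T) {u v : Fin n} (huv : u ≠ v)
    (h : T u v = false) : T v u = true := by
  rw [hT.2 v u huv.symm, h]; rfl

lemma beats_of_score_eq_one (hT : IsTournament T) {u v w : Fin n} (hv : score T v = 1)
    (hvu : T v u = true) (hwu : w ≠ u) (hwv : w ≠ v) : T w v = true :=
  hT.beats_of_not_beats hwv.symm <|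
    Bool.eq_false_iff.2 fun hvw => hwu (eq_of_score_eq_one hv hvw hvu)

lemma beats_add_beats (hT : IsTournament T) (u v : Fin n) :
    (if T u v then 1 else 0) + (if T v u then 1 else 0) = if u = v then 0 else 1 := by
  by_cases huv : u = v
  · subst huv; simp [hT.1 u]
  · rw [hT.2 u v huv]; cases T v u <;> simp [huv]

lemma sum_card_beats_eq_choose_two (hT : IsTournament T) (s : Finset (Fin n)) :
    ∑ x ∈ s, #{y ∈ s | T x y = true} = s.card.choose 2 := by
  have hdouble : 2 * ∑ x ∈ s, #{y ∈ s | T x y = true} = s.card * (s.card - 1) :=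
    calc 2 * ∑ x ∈ s, #{y ∈ s | T x y = true}
        = ∑ x ∈ s, ∑ y ∈ s, ((if T x y then 1 else 0) + (if T y x then 1 else 0)) := by
          simp only [two_mul, card_filter, sum_add_distrib]
          exact congrArg _ sum_comm
      _ = ∑ x ∈ s, ∑ y ∈ s, if x = y then 0 else 1 := by simp only [hT.beats_add_beats]
      _ = ∑ _x ∈ s, (s.card - 1) := sum_congr rfl fun x hx => by
          rw [sum_ite, sum_const_zero, sum_const, filter_ne, card_erase_of_mem hx,
            smul_eq_mul, mul_one, zero_add]
      _ = s.card * (s.card - 1) := by rw [sum_const, smul_eq_mul]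
  rw [Nat.choose_two_right]; omega

end IsTournament

end

lemma Finset.map_val_eq_1113_or_1122 {ι : Type*} {s : Finset ι} {f : ι → ℕ} (hs : #s = 4)
    (hpos : ∀ x ∈ s, 1 ≤ f x) (hle : ∀ x ∈ s, f x ≤ 3) (hsum : ∑ x ∈ s, f x = 6) :
    s.val.map f = {1, 1, 1, 3} ∨ s.val.map f = {1, 1, 2, 2} := by
  rw [sum_eq_multiset_sum] at hsum
  replace hpos : ∀ k ∈ s.val.map f, 1 ≤ k := Multiset.forall_mem_map_iff.2 hpos
  replace hle : ∀ k ∈ s.val.map f, k ≤ 3 := Multiset.forall_mem_map_iff.2 hle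
  have hcard : Multiset.card (s.val.map f) = 4 := by rwa [Multiset.card_map, ← card_def]
  obtain ⟨a, b, c, d, hm⟩ := Multiset.card_eq_four.1 hcard
  simp only [hm, Multiset.insert_eq_cons, Multiset.mem_cons, Multiset.mem_singleton,
    forall_eq_or_imp, forall_eq] at hpos hle
  simp only [hm, Multiset.insert_eq_cons, Multiset.sum_cons, Multiset.sum_singleton] at hsum
  obtain ⟨ha1, hb1, hc1, hd1⟩ := hpos
  obtain ⟨ha3, hb3, hc3, hd3⟩ := hle
  rw [hm]
  interval_cases a <;> interval_cases b <;> interval_cases c <;> interval_cases d <;>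
    first | omega | decide

theorem six_tournament_1233_general {T : Fin 6 → Fin 6 → Bool}
    (hT : IsTournament T) (a b : Fin 6) (hab : a ≠ b)
    (ha : score T a = 1)
    (hrest : ∀ x : Fin 6, x ≠ a → x ≠ b → score T x = 3) :
    let C : Finset (Fin 6) := Finset.univ.filter (fun x => x ≠ a ∧ x ≠ b)
    let score' : Fin 6 → ℕ := fun x => (C.filter (fun y => T x y = true)).card
    (Multiset.map score' C.val = ({1, 1, 1, 3} : Multiset ℕ) ∨
      Multiset.map score' C.val = ({1, 1, 2, 2} : Multiset ℕ)) ∧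
    (T a b = true → Multiset.map score' C.val = ({1, 1, 2, 2} : Multiset ℕ)) := by
  intro C score'
  have hmemC : ∀ x ∈ C, x ≠ a ∧ x ≠ b := fun x hx => (mem_filter.1 hx).2
  have hCc : #Cᶜ = 2 := by
    rw [← card_pair hab]; congr 1; ext x; simp [C]; tauto
  have hC : #C = 4 := by have := card_compl_add_card C; simp only [Fintype.card_fin] at this; omega
  have hrestC : ∀ x ∈ C, score T x = 3 := fun x hx => hrest x (hmemC x hx).1 (hmemC x hx).2
  have hsum : ∑ x ∈ C, score' x = 6 := by rw [hT.sum_card_beats_eq_choose_two C, hC]; rfl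
  have hpos : ∀ x ∈ C, 1 ≤ score' x := fun x hx => by
    have := score_sub_card_compl_le_card_beats T C x
    rwa [hrestC x hx, hCc] at this
  have hle : ∀ x ∈ C, score' x ≤ 3 := fun x hx => hrestC x hx ▸ card_beats_le_score T C x
  have h1113_or_1122 := Finset.map_val_eq_1113_or_1122 hC hpos hle hsum
  refine ⟨h1113_or_1122, fun hab' => h1113_or_1122.resolve_left fun h1113 => ?_⟩
  -- A vertex with three wins inside `C` beats nothing outside `C`, yet it beats `a`.
  obtain ⟨x, hx, hx3⟩ := Multiset.mem_map.1 (h1113 ▸ by simp : 3 ∈ C.val.map score')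
  have hxa : T x a = true := hT.beats_of_score_eq_one ha hab' (hmemC x hx).2 (hmemC x hx).1
  have := card_beats_lt_score_of_beats (fun haC => (hmemC a haC).1 rfl) hxa
  rw [hrestC x hx] at this
  exact this.ne hx3

/-- In a 6-vertex tournament with score sequence `(1,2,3,3,3,3)`, the induced
subtournament `T'` on the four vertices of out-degree 3 has score sequence
`(1,1,1,3)` or `(1,1,2,2)`; and if the edge between the vertices of out-degree
1 and 2 is oriented from the former to the latter, then `T'` has score
sequence `(1,1,2,2)`. -/
theorem six_tournament_1233 {T : Fin 6 → Fin 6 → Bool}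
    (hT : IsTournament T) (a b : Fin 6) (hab : a ≠ b)
    (ha : score T a = 1) (hb : score T b = 2)
    (hrest : ∀ x : Fin 6, x ≠ a → x ≠ b → score T x = 3) :
    let C : Finset (Fin 6) := Finset.univ.filter (fun x => x ≠ a ∧ x ≠ b)
    let score' : Fin 6 → ℕ := fun x => (C.filter (fun y => T x y = true)).card
    (Multiset.map score' C.val = ({1, 1, 1, 3} : Multiset ℕ) ∨
      Multiset.map score' C.val = ({1, 1, 2, 2} : Multiset ℕ)) ∧
    (T a b = true → Multiset.map score' C.val = ({1, 1, 2, 2} : Multiset ℕ)) :=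
  six_tournament_1233_general hT a b hab ha hrest
end

section
/- Let T be a tournament on n vertices with score sequence (1, 1, s3, s4, ..., sn). Let v and w be the two vertices of out-degree 1. Then the edge between v and w is oriented, without loss of generality, from v to w, and every other vertex x has its edge oriented from x to v. Consequently, the tournament T' on n-1 vertices obtained from T by deleting v has score sequence (1, s3-1, s4-1, ..., sn-1). -/
open Finset

/-- If `v` and `w` are the two vertices of out-degree 1 in an `n`-vertex
tournament, with the edge between them oriented from `v` to `w`, then every
other vertex beats `v`, and the `(n-1)`-vertex tournament obtained by deleting
`v` (the result of contracting `vw` and removing the resulting symmetric edge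
pair) has score sequence `(1, s₃ - 1, ..., sₙ - 1)`: the merged vertex `w` has
out-degree 1 and every other vertex's out-degree drops by exactly 1. -/
theorem score_sequence_one_one_reduction {n : ℕ} {T : Fin n → Fin n → Bool}
    (hT : IsTournament T) (v w : Fin n) (hvw : v ≠ w)
    (hv : score T v = 1) (hw : score T w = 1) (hedge : T v w = true) :
    let score' : Fin n → ℕ :=
      fun x => (Finset.univ.filter (fun y => y ≠ v ∧ T x y = true)).card
    (∀ x : Fin n, x ≠ v → x ≠ w → T x v = true) ∧
    score' w = 1 ∧
    (∀ x : Fin n, x ≠ v → x ≠ w → score' x = score T x - 1) := by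
  intro score'
  obtain ⟨hirr, hasym⟩ := hT
  have hvonly : ∀ x, T v x = true → x = w := by
    intro x hx
    by_contra hxw
    have hwmem : w ∈ Finset.univ.filter (fun y => T v y = true) := by simp [hedge]
    have hxmem : x ∈ Finset.univ.filter (fun y => T v y = true) := by simp [hx]
    have : ({x, w} : Finset (Fin n)) ⊆ Finset.univ.filter (fun y => T v y = true) := by
      intro y hy; simp at hy; rcases hy with h | h <;> subst h
      · exact hxmem
      · exact hwmem
    have h2 : ({x, w} : Finset (Fin n)).card = 2 := by
      rw [Finset.card_insert_of_notMem (by simp [hxw]), Finset.card_singleton]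
    have := Finset.card_le_card this
    rw [h2] at this
    simp [score] at hv
    omega
  have hbeat : ∀ x : Fin n, x ≠ v → x ≠ w → T x v = true := by
    intro x hxv hxw
    have hvx : T v x = false := by
      cases h : T v x
      · rfl
      · exact absurd (hvonly x h) hxw
    have := hasym x v hxv
    rw [hvx] at this
    simpa using this
  refine ⟨hbeat, ?_, ?_⟩
  · have hwv : T w v = false := by
      have := hasym w v (Ne.symm hvw)
      rw [hedge] at this
      simpa using this
    have : (Finset.univ.filter (fun y => y ≠ v ∧ T w y = true))
        = Finset.univ.filter (fun y => T w y = true) := by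
      ext y
      simp only [Finset.mem_filter, Finset.mem_univ, true_and]
      constructor
      · rintro ⟨_, h⟩; exact h
      · intro h; refine ⟨?_, h⟩; rintro rfl; rw [hwv] at h; simp at h
    simpa [score', this, score] using hw
  · intro x hxv hxw
    have hxvmem : v ∈ Finset.univ.filter (fun y => T x y = true) := by
      simp [hbeat x hxv hxw]
    have : (Finset.univ.filter (fun y => y ≠ v ∧ T x y = true))
        = (Finset.univ.filter (fun y => T x y = true)).erase v := by
      ext y
      simp only [Finset.mem_filter, Finset.mem_univ, true_and, Finset.mem_erase]
    show (Finset.univ.filter (fun y => y ≠ v ∧ T x y = true)).card = score T x - 1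
    rw [this, Finset.card_erase_of_mem hxvmem]
    rfl
end

section
/- Landau's theorem: a nondecreasing sequence of nonnegative integers (s1, s2, ..., sn) is the score sequence of some tournament on n vertices if and only if for every 1 <= j <= n, s1 + s2 + ... + sj >= j(j-1)/2, with equality when j = n. -/
/-!
Necessity: the `(#A).choose 2` games played between the vertices of a set `A` are all won by
vertices of `A`, so their scores sum to at least `(#A).choose 2`, with equality for `A = univ`.

Sufficiency: for nondecreasing `s` the prefix of length `#Y` has the smallest sum among sets of
`#Y` indices, so `(#Y).choose 2 ≤ ∑ v ∈ Y, s v` for every set `Y` of vertices. This is Hall's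
condition for matching the pairs of vertices injectively into `s v` copies of each vertex `v`
lying in the pair. Both sides have `n.choose 2` elements, so the matching is a bijection, and
orienting each pair towards the vertex it is matched to gives a tournament with scores `s`.
-/
open Finset

theorem Monotone.sum_filter_val_lt_card_le_sum {n : ℕ} {β : Type*} [AddCommMonoid β]
    [PartialOrder β] [IsOrderedAddMonoid β] {s : Fin n → β} (hs : Monotone s)
    (Y : Finset (Fin n)) :
    ∑ i ∈ univ.filter (fun i : Fin n => i.val < #Y), s i ≤ ∑ i ∈ Y, s i := by
  induction Y using Finset.induction_on_max with
  | empty => simp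
  | insert a Y hlt ih =>
    have hcard : #Y ≤ a.val := by
      simpa using card_le_card (fun x hx => mem_Iio.2 (hlt x hx) : Y ⊆ Iio a)
    have hprefix : (univ.filter fun i : Fin n => i.val < #Y + 1) =
        insert (⟨#Y, by omega⟩ : Fin n) (univ.filter fun i : Fin n => i.val < #Y) := by
      ext i
      simp only [mem_filter, mem_univ, true_and, mem_insert, Fin.ext_iff]
      omega
    have hnotin : a ∉ Y := fun ha => lt_irrefl a (hlt a ha)
    rw [card_insert_of_notMem hnotin, sum_insert hnotin, hprefix, sum_insert (by simp)]
    exact add_le_add (hs (Fin.mk_le_of_le_val hcard)) ih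

theorem exists_pair_winner_card_eq {α : Type*} [Fintype α] [DecidableEq α] {s : α → ℕ}
    (hs : ∀ Y : Finset α, (#Y).choose 2 ≤ ∑ v ∈ Y, s v)
    (hsum : ∑ v, s v = (Fintype.card α).choose 2) :
    ∃ w : {e : Finset α // #e = 2} → α,
      (∀ e, w e ∈ e.1) ∧ ∀ v, #{e | w e = v} = s v := by
  let t : {e : Finset α // #e = 2} → Finset (Σ v, Fin (s v)) := fun e => e.1.sigma fun _ => univ
  have hall : ∀ X : Finset {e : Finset α // #e = 2}, #X ≤ #(X.biUnion t) := by
    intro X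
    set N := X.biUnion Subtype.val
    have hN : X.biUnion t = N.sigma fun _ => univ := by
      ext ⟨v, i⟩
      simp [t, N]
    calc #X ≤ #(N.powersetCard 2) :=
          card_le_card_of_injOn Subtype.val
            (fun e he => mem_powersetCard.2 ⟨subset_biUnion_of_mem _ he, e.2⟩)
            Subtype.val_injective.injOn
      _ = (#N).choose 2 := card_powersetCard _ _
      _ ≤ ∑ v ∈ N, s v := hs N
      _ = #(X.biUnion t) := by simp [hN, card_sigma]
  obtain ⟨f, hinj, hf⟩ := (all_card_le_biUnion_card_iff_exists_injective t).1 hall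
  have hbij : Function.Bijective f :=
    (Fintype.bijective_iff_injective_and_card f).2 ⟨hinj, by simp [hsum]⟩
  refine ⟨fun e => (f e).1, fun e => by simpa [t] using hf e, fun v => ?_⟩
  rw [card_equiv (Equiv.ofBijective f hbij) (t := ({v} : Finset α).sigma fun _ => univ)
    (by simp [eq_comm]), card_sigma]
  simp

namespace IsTournament

variable {n : ℕ} {T : Fin n → Fin n → Bool}

theorem ne_of_beats (hT : IsTournament T) {u v : Fin n} (h : T u v = true) : u ≠ v := by
  rintro rfl
  simp [hT.1 u] at h

theorem not_beats_of_beats (hT : IsTournament T) {u v : Fin n} (h : T u v = true) :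
    T v u = false := by
  simpa [h] using hT.2 v u (hT.ne_of_beats h).symm

theorem beats_or_beats (hT : IsTournament T) {u v : Fin n} (h : u ≠ v) :
    T u v = true ∨ T v u = true := by
  cases huv : T u v <;> simp_all [hT.2 u v h]

theorem sum_card_wins_within (hT : IsTournament T) (A : Finset (Fin n)) :
    ∑ v ∈ A, #{w ∈ A | T v w} = (#A).choose 2 := by
  rw [← card_sigma, ← card_powersetCard]
  refine card_bij (fun p _ => {p.1, p.2}) ?_ ?_ ?_
  · rintro ⟨u, v⟩ huv
    simp only [mem_sigma, mem_filter] at huv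
    exact mem_powersetCard.2 ⟨by simp [insert_subset_iff, huv.1, huv.2.1],
      card_pair (hT.ne_of_beats huv.2.2)⟩
  · rintro ⟨u, v⟩ huv ⟨u', v'⟩ huv' h
    simp only [mem_sigma, mem_filter] at huv huv'
    rw [← coe_inj, coe_pair, coe_pair, Set.pair_eq_pair_iff] at h
    rcases h with ⟨rfl, rfl⟩ | ⟨rfl, rfl⟩
    · rfl
    · simp [hT.not_beats_of_beats huv.2.2] at huv'
  · intro e he
    obtain ⟨hsub, hcard⟩ := mem_powersetCard.1 he
    obtain ⟨x, y, hxy, rfl⟩ := card_eq_two.1 hcard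
    rw [insert_subset_iff, singleton_subset_iff] at hsub
    rcases hT.beats_or_beats hxy with h | h
    · exact ⟨⟨x, y⟩, by simp [hsub, h], rfl⟩
    · exact ⟨⟨y, x⟩, by simp [hsub, h], pair_comm y x⟩

theorem choose_two_le_sum_score (hT : IsTournament T) (A : Finset (Fin n)) :
    (#A).choose 2 ≤ ∑ v ∈ A, score T v :=
  (hT.sum_card_wins_within A).ge.trans <| sum_le_sum fun _ _ =>
    card_le_card <| filter_subset_filter _ (subset_univ A)

theorem sum_score (hT : IsTournament T) : ∑ v, score T v = n.choose 2 := by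
  simpa [score] using hT.sum_card_wins_within univ

end IsTournament

section tournamentOfWinner

variable {n : ℕ} (w : {e : Finset (Fin n) // #e = 2} → Fin n)

def tournamentOfWinner (u v : Fin n) : Bool :=
  decide (∃ e, e.1 = {u, v} ∧ w e = u)

theorem tournamentOfWinner_eq_true_iff {u v : Fin n} (huv : u ≠ v) :
    tournamentOfWinner w u v = true ↔ w ⟨{u, v}, card_pair huv⟩ = u := by
  simp only [tournamentOfWinner, decide_eq_true_eq]
  constructor
  · rintro ⟨e, he, hwe⟩
    rwa [show e = ⟨{u, v}, card_pair huv⟩ from Subtype.ext he] at hwe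
  · exact fun h => ⟨_, rfl, h⟩

variable {w}

theorem isTournament_tournamentOfWinner (hw : ∀ e, w e ∈ e.1) :
    IsTournament (tournamentOfWinner w) := by
  refine ⟨fun v => ?_, fun u v huv => ?_⟩
  · simp only [tournamentOfWinner, decide_eq_false_iff_not, not_exists, not_and]
    intro e he
    simpa [he] using e.2
  · have hmem : w ⟨{u, v}, card_pair huv⟩ = u ∨ w ⟨{u, v}, card_pair huv⟩ = v := by
      simpa using hw ⟨{u, v}, card_pair huv⟩
    have hswap : w ⟨{v, u}, card_pair huv.symm⟩ = w ⟨{u, v}, card_pair huv⟩ := by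
      congr 2; exact pair_comm v u
    have key : tournamentOfWinner w u v = true ↔ ¬tournamentOfWinner w v u = true := by
      rw [tournamentOfWinner_eq_true_iff w huv, tournamentOfWinner_eq_true_iff w huv.symm, hswap]
      rcases hmem with h | h <;> simp [h, huv, huv.symm]
    revert key
    cases tournamentOfWinner w u v <;> cases tournamentOfWinner w v u <;> simp

theorem score_tournamentOfWinner (hw : ∀ e, w e ∈ e.1) (u : Fin n) :
    score (tournamentOfWinner w) u = #{e | w e = u} := by
  have hT : IsTournament (tournamentOfWinner w) := isTournament_tournamentOfWinner hw
  refine card_bij (fun v hv => ⟨{u, v}, card_pair (hT.ne_of_beats (mem_filter.1 hv).2)⟩)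
    ?_ ?_ ?_
  · intro v hv
    simpa [tournamentOfWinner_eq_true_iff w (hT.ne_of_beats (mem_filter.1 hv).2)] using
      (mem_filter.1 hv).2
  · intro v hv v' _ h
    rw [Subtype.mk.injEq, ← coe_inj, coe_pair, coe_pair, Set.pair_eq_pair_iff] at h
    rcases h with ⟨-, h⟩ | ⟨-, rfl⟩
    · exact h
    · exact absurd rfl (hT.ne_of_beats (mem_filter.1 hv).2)
  · rintro ⟨e, he⟩ hwe
    obtain ⟨x, y, hxy, rfl⟩ := card_eq_two.1 he
    replace hwe : w ⟨{x, y}, he⟩ = u := (mem_filter.1 hwe).2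
    have hu := hw ⟨{x, y}, he⟩
    rw [hwe, mem_insert, mem_singleton] at hu
    rcases hu with rfl | rfl
    · exact ⟨y, by simpa [tournamentOfWinner_eq_true_iff w hxy] using hwe, rfl⟩
    · have hpair : ({u, x} : Finset (Fin n)) = {x, u} := pair_comm u x
      exact ⟨x, by simpa [tournamentOfWinner_eq_true_iff w hxy.symm, hpair] using hwe,
        Subtype.ext hpair⟩

end tournamentOfWinner

theorem exists_isTournament_score_eq {n : ℕ} {s : Fin n → ℕ}
    (hs : ∀ Y : Finset (Fin n), (#Y).choose 2 ≤ ∑ v ∈ Y, s v)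
    (hsum : ∑ v, s v = n.choose 2) :
    ∃ T, IsTournament T ∧ ∀ v, score T v = s v := by
  obtain ⟨w, hw, hcard⟩ := exists_pair_winner_card_eq hs (by simpa using hsum)
  exact ⟨tournamentOfWinner w, isTournament_tournamentOfWinner hw,
    fun v => (score_tournamentOfWinner hw v).trans (hcard v)⟩

/-- Landau's theorem: a nondecreasing sequence `s` of naturals is the score
sequence of some tournament on `n` vertices iff every initial segment of
length `j` sums to at least `j(j-1)/2`, with equality for `j = n`. -/
theorem landau {n : ℕ} (s : Fin n → ℕ) (hmono : Monotone s) :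
    (∃ T : Fin n → Fin n → Bool, IsTournament T ∧
      ∃ e : Equiv.Perm (Fin n), ∀ i : Fin n, score T (e i) = s i) ↔
    ((∀ j : ℕ, j ≤ n →
        j * (j - 1) / 2 ≤ ∑ i ∈ Finset.univ.filter (fun i : Fin n => i.val < j), s i) ∧
      ∑ i : Fin n, s i = n * (n - 1) / 2) := by
  simp_rw [← Nat.choose_two_right]
  constructor
  · rintro ⟨T, hT, e, hs⟩
    have hsum (A : Finset (Fin n)) :
        ∑ i ∈ A, s i = ∑ v ∈ A.map e.toEmbedding, score T v := by
      simp [hs]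
    refine ⟨fun j hj => ?_, ?_⟩
    · have := hT.choose_two_le_sum_score (({i | i.val < j} : Finset (Fin n)).map e.toEmbedding)
      rwa [card_map, Fin.card_filter_val_lt, min_eq_right hj, ← hsum] at this
    · rw [hsum, map_univ_equiv, hT.sum_score]
  · rintro ⟨hprefix, hsum⟩
    obtain ⟨T, hT, hscore⟩ := exists_isTournament_score_eq
      (fun Y => (hprefix _ (card_finset_fin_le Y)).trans (hmono.sum_filter_val_lt_card_le_sum Y))
      hsum
    exact ⟨T, hT, Equiv.refl _, hscore⟩
end

section
/- Let T be a tournament on 10 vertices partitioned into A and B with |A| = |B| = 5 and the out-degrees of A summing to 11, and let e be the unique edge from A to B. Then any directed cycle of T that contains vertices of both A and B must contain the edge e; consequently, two vertex-disjoint directed cycles cannot both contain vertices of both A and B. -/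
open Finset

namespace Fin

theorem forall_of_imp_add_one_s19 {n : ℕ} {P : Fin (n + 1) → Prop}
    (hstep : ∀ i, P i → P (i + 1)) {i₀ : Fin (n + 1)} (hi₀ : P i₀) (j : Fin (n + 1)) : P j := by
  have hshift : ∀ k : Fin (n + 1), P (i₀ + k) := by
    intro k
    induction k using Fin.induction with
    | zero => simpa using hi₀
    | succ k ih => simpa [← Fin.coeSucc_eq_succ, ← add_assoc] using hstep _ ih
  simpa using hshift (j - i₀)

theorem exists_and_not_add_one {n : ℕ} {P : Fin (n + 1) → Prop}
    (hpos : ∃ i, P i) (hneg : ∃ j, ¬ P j) : ∃ i, P i ∧ ¬ P (i + 1) := by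
  obtain ⟨i₀, hi₀⟩ := hpos
  obtain ⟨j, hj⟩ := hneg
  by_contra! hclosed
  exact hj (forall_of_imp_add_one_s19 hclosed hi₀ j)

end Fin

theorem IsDirCycle.exists_arc_eq_of_unique_exit {n m : ℕ} {T : Fin n → Fin n → Bool}
    {c : Fin (m + 1) → Fin n} (hc : IsDirCycle T c) {A : Finset (Fin n)} {a b : Fin n}
    (huniq : ∀ x ∈ A, ∀ y ∉ A, T x y = true → x = a ∧ y = b)
    (hin : ∃ i, c i ∈ A) (hout : ∃ j, c j ∉ A) : ∃ i, c i = a ∧ c (i + 1) = b := by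
  obtain ⟨i, hiA, hi'A⟩ := Fin.exists_and_not_add_one hin hout
  exact ⟨i, huniq _ hiA _ hi'A (hc.2 i)⟩

theorem crossing_cycles_use_unique_edge_general {T : Fin 10 → Fin 10 → Bool}
    (A : Finset (Fin 10)) (a b : Fin 10)
    (huniq : ∀ x ∈ A, ∀ y ∉ A, T x y = true → x = a ∧ y = b) :
    (∀ (m : ℕ) (c : Fin (m + 1) → Fin 10), IsDirCycle T c →
      (∃ i, c i ∈ A) → (∃ j, c j ∉ A) → ∃ i, c i = a ∧ c (i + 1) = b) ∧
    (∀ (m₁ m₂ : ℕ) (c₁ : Fin (m₁ + 1) → Fin 10) (c₂ : Fin (m₂ + 1) → Fin 10),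
      IsDirCycle T c₁ → IsDirCycle T c₂ → (∀ i j, c₁ i ≠ c₂ j) →
      ¬ (((∃ i, c₁ i ∈ A) ∧ (∃ j, c₁ j ∉ A)) ∧
         ((∃ i, c₂ i ∈ A) ∧ (∃ j, c₂ j ∉ A)))) := by
  refine ⟨fun m c hc => hc.exists_arc_eq_of_unique_exit huniq, ?_⟩
  rintro m₁ m₂ c₁ c₂ hc₁ hc₂ hdisj ⟨⟨hin₁, hout₁⟩, hin₂, hout₂⟩
  obtain ⟨i, hi, -⟩ := hc₁.exists_arc_eq_of_unique_exit huniq hin₁ hout₁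
  obtain ⟨j, hj, -⟩ := hc₂.exists_arc_eq_of_unique_exit huniq hin₂ hout₂
  exact hdisj i j (hi.trans hj.symm)

/-- If exactly one edge `ab` of a 10-vertex tournament is oriented from the
5-set `A` (whose scores sum to 11) to the complement, then every directed
cycle meeting both `A` and its complement contains the edge `ab`; consequently
two vertex-disjoint directed cycles cannot both meet both sides. -/
theorem crossing_cycles_use_unique_edge {T : Fin 10 → Fin 10 → Bool}
    (hT : IsTournament T) (A : Finset (Fin 10)) (hA : A.card = 5)
    (hsum : ∑ v ∈ A, score T v = 11)
    (a b : Fin 10) (haA : a ∈ A) (hbA : b ∉ A) (hab : T a b = true)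
    (huniq : ∀ x ∈ A, ∀ y ∉ A, T x y = true → x = a ∧ y = b) :
    (∀ (m : ℕ) (c : Fin (m + 1) → Fin 10), IsDirCycle T c →
      (∃ i, c i ∈ A) → (∃ j, c j ∉ A) → ∃ i, c i = a ∧ c (i + 1) = b) ∧
    (∀ (m₁ m₂ : ℕ) (c₁ : Fin (m₁ + 1) → Fin 10) (c₂ : Fin (m₂ + 1) → Fin 10),
      IsDirCycle T c₁ → IsDirCycle T c₂ → (∀ i j, c₁ i ≠ c₂ j) →
      ¬ (((∃ i, c₁ i ∈ A) ∧ (∃ j, c₁ j ∉ A)) ∧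
         ((∃ i, c₂ i ∈ A) ∧ (∃ j, c₂ j ∉ A)))) :=
  crossing_cycles_use_unique_edge_general A a b huniq
end
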